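/- arXiv:math/0412543 — 4 statements merged into one kernel-verified Lean document; each statement's English description precedes it below -/
import Mathlib

section
/- Suppose U(p) = A p + c is affine with A a diagonal linear map on ℝ², diag(ε_xx, ε_yy), with |ε_xx| < 1 and |ε_yy| < 1. Then for the scheme with zero corrective term, both components of the residual satisfy Δ_x^j = (-ε_xx)^{j-1} Δ_x^1 and Δ_y^j = (-ε_yy)^{j-1} Δ_y^1, and hence Δ^j → 0. -/
open Filter Topology

/-!
Subtracting consecutive residuals, the constant part of `U` and the target `M^d` cancel, so
`Δ^{j+1} = -A Δ^j`. For diagonal `A` this is a scalar geometric recursion in each coordinate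
with ratio `-ε`, and `|ε| < 1` makes it tend to zero.
-/

theorem residual_succ_eq_neg_map {E : Type*} [AddCommGroup E] (A : E →+ E) {c Md : E}
    {U : E → E} (hU : ∀ p, U p = A p + c) {M N Δ : ℕ → E}
    (hM : ∀ j, 2 ≤ j → M j = M (j - 1) + Δ (j - 1))
    (hN : ∀ j, 1 ≤ j → N j = M j + U (M j))
    (hΔ : ∀ j, 1 ≤ j → Δ j = Md - N j) {j : ℕ} (hj : 1 ≤ j) :
    Δ (j + 1) = -A (Δ j) := by
  have hM_succ : M (j + 1) = M j + Δ j := by simpa using hM (j + 1) (by omega)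
  have hMd : Md = Δ j + (M j + (A (M j) + c)) := by
    rw [← sub_eq_iff_eq_add, ← hU, ← hN j hj, hΔ j hj]
  rw [hΔ _ (by omega), hN _ (by omega), hU, hM_succ, map_add, hMd]
  abel

theorem eq_pow_sub_one_mul_of_succ_eq_mul {R : Type*} [Monoid R] {u : ℕ → R} {r : R}
    (h : ∀ j, 1 ≤ j → u (j + 1) = r * u j) : ∀ j, 1 ≤ j → u j = r ^ (j - 1) * u 1 := by
  intro j hj
  induction j, hj using Nat.le_induction with
  | base => simp
  | succ j hj ih => rw [h j hj, ih, ← mul_assoc, ← pow_succ', Nat.sub_add_cancel hj]; simp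

theorem tendsto_zero_of_eq_pow_sub_one_mul {u : ℕ → ℝ} {r : ℝ} (hr : |r| < 1)
    (h : ∀ j, 1 ≤ j → u j = r ^ (j - 1) * u 1) : Tendsto u atTop (𝓝 0) := by
  have hpow : Tendsto (fun j : ℕ => r ^ (j - 1) * u 1) atTop (𝓝 0) := by
    simpa using ((tendsto_pow_atTop_nhds_zero_of_abs_lt_one hr).comp
      (tendsto_sub_atTop_nat 1)).mul_const (u 1)
  exact hpow.congr' (eventually_atTop.2 ⟨1, fun j hj => (h j hj).symm⟩)

theorem residual_diagonal_converges_general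
    (εxx εyy : ℝ) (hx : |εxx| < 1) (hy : |εyy| < 1)
    (c : ℝ × ℝ) (U : ℝ × ℝ → ℝ × ℝ)
    (hU : ∀ p : ℝ × ℝ, U p = (εxx * p.1, εyy * p.2) + c)
    (Md : ℝ × ℝ) (M N Δ : ℕ → ℝ × ℝ)
    (hM : ∀ j, 2 ≤ j → M j = M (j - 1) + Δ (j - 1))
    (hN : ∀ j, 1 ≤ j → N j = M j + U (M j))
    (hΔ : ∀ j, 1 ≤ j → Δ j = Md - N j) :
    (∀ j, 1 ≤ j → (Δ j).1 = (-εxx) ^ (j - 1) * (Δ 1).1 ∧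
        (Δ j).2 = (-εyy) ^ (j - 1) * (Δ 1).2) ∧
      Tendsto Δ atTop (𝓝 0) := by
  let A : ℝ × ℝ →+ ℝ × ℝ := (AddMonoidHom.mulLeft εxx).prodMap (AddMonoidHom.mulLeft εyy)
  have hstep (j : ℕ) (hj : 1 ≤ j) := residual_succ_eq_neg_map A hU hM hN hΔ hj
  have hΔx := eq_pow_sub_one_mul_of_succ_eq_mul (u := fun j => (Δ j).1) (r := -εxx)
    fun j hj => by simp [hstep j hj, A]
  have hΔy := eq_pow_sub_one_mul_of_succ_eq_mul (u := fun j => (Δ j).2) (r := -εyy)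
    fun j hj => by simp [hstep j hj, A]
  refine ⟨fun j hj => ⟨hΔx j hj, hΔy j hj⟩, ?_⟩
  rw [← Prod.mk_zero_zero, Prod.tendsto_iff]
  exact ⟨tendsto_zero_of_eq_pow_sub_one_mul (by rwa [abs_neg]) hΔx,
    tendsto_zero_of_eq_pow_sub_one_mul (by rwa [abs_neg]) hΔy⟩

/-- For an affine field with diagonal linear part diag(εxx, εyy), |εxx| < 1,
|εyy| < 1, the zero-corrective-term scheme satisfies
Δ_x^j = (-εxx)^(j-1) Δ_x^1, Δ_y^j = (-εyy)^(j-1) Δ_y^1, hence Δ^j → 0. -/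
theorem residual_diagonal_converges
    (εxx εyy : ℝ) (hx : |εxx| < 1) (hy : |εyy| < 1)
    (c : ℝ × ℝ) (U : ℝ × ℝ → ℝ × ℝ)
    (hU : ∀ p : ℝ × ℝ, U p = (εxx * p.1, εyy * p.2) + c)
    (Md : ℝ × ℝ) (M N Δ : ℕ → ℝ × ℝ)
    (hM1 : M 1 = Md)
    (hM : ∀ j, 2 ≤ j → M j = M (j - 1) + Δ (j - 1))
    (hN : ∀ j, 1 ≤ j → N j = M j + U (M j))
    (hΔ : ∀ j, 1 ≤ j → Δ j = Md - N j) :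
    (∀ j, 1 ≤ j → (Δ j).1 = (-εxx) ^ (j - 1) * (Δ 1).1 ∧
        (Δ j).2 = (-εyy) ^ (j - 1) * (Δ 1).2) ∧
      Tendsto Δ atTop (𝓝 0) :=
  residual_diagonal_converges_general εxx εyy hx hy c U hU Md M N Δ hM hN hΔ
end

section
/- Suppose U(p) = A p + c is affine and I + A is invertible. If at each step j ≥ 2 the corrective term B^j is chosen to satisfy (I + A) B^j = -(A - D) Δ^{j-1}, where D is the diagonal part of A, then the residual satisfies the exact component-wise recursion Δ_x^j = -ε_xx Δ_x^{j-1} and Δ_y^j = -ε_yy Δ_y^{j-1}, where ε_xx, ε_yy are the diagonal entries of A. -/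
/-- Scheme (II): if U(p) = A p + c is affine, I + A is invertible, and the
corrective term B^j solves (I + A) B^j = -(A - D) Δ^{j-1} (D the diagonal part
of A), then Δ_x^j = -εxx Δ_x^{j-1} and Δ_y^j = -εyy Δ_y^{j-1}. -/
theorem residual_recursion_scheme_II
    (A : Matrix (Fin 2) (Fin 2) ℝ)
    (D : Matrix (Fin 2) (Fin 2) ℝ) (hD : D = Matrix.diagonal (fun i => A i i))
    (hinv : IsUnit (1 + A))
    (c : Fin 2 → ℝ) (U : (Fin 2 → ℝ) → (Fin 2 → ℝ))
    (hU : ∀ p, U p = A.mulVec p + c)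
    (Md : Fin 2 → ℝ) (M B Δ : ℕ → Fin 2 → ℝ)
    (hM1 : M 1 = Md)
    (hM : ∀ j, 2 ≤ j → M j = M (j - 1) + Δ (j - 1) + B j)
    (hB : ∀ j, 2 ≤ j → (1 + A).mulVec (B j) = -((A - D).mulVec (Δ (j - 1))))
    (hΔ : ∀ j, 1 ≤ j → Δ j = Md - M j - U (M j)) :
    ∀ j, 2 ≤ j → Δ j 0 = -(A 0 0) * Δ (j - 1) 0 ∧ Δ j 1 = -(A 1 1) * Δ (j - 1) 1 := by
  intro j hj
  have h1 : 1 ≤ j - 1 := by omega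
  have e1 := hΔ j (by omega)
  have e2 := hΔ (j-1) h1
  have e3 := hM j hj
  have e4 := hB j hj
  rw [hU] at e1 e2
  subst hD
  have f10 := congrFun e1 0
  have f11 := congrFun e1 1
  have f20 := congrFun e2 0
  have f21 := congrFun e2 1
  have f30 := congrFun e3 0
  have f31 := congrFun e3 1
  have f40 := congrFun e4 0
  have f41 := congrFun e4 1
  simp [Matrix.mulVec, dotProduct, Fin.sum_univ_two, Matrix.diagonal,
    Matrix.one_apply, Pi.add_apply, Pi.sub_apply, Pi.neg_apply] at f10 f11 f20 f21 f30 f31 f40 f41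
  constructor
  · linear_combination f10 - f20 - (1 + A 0 0) * f30 - A 0 1 * f31 - f40
  · linear_combination f11 - f21 - (1 + A 1 1) * f31 - A 1 0 * f30 - f41
end

section
/- With the corrective term of scheme (II) (i.e., (I + A)B^j = -(A - D)Δ^{j-1}) and affine U(p) = A p + c where the diagonal entries of A satisfy |ε_xx| < 1 and |ε_yy| < 1, the residual converges to zero: ‖Δ^j‖ ≤ (max(|ε_xx|, |ε_yy|))^{j-1} ‖Δ^1‖ for all j ≥ 1. -/
open Matrix

/-- The correction `B` cancels exactly the off-diagonal part `(A - D) Δ` of the update. -/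
theorem residual_succ_eq_neg_diag_mulVec {ι R : Type*} [Fintype ι] [DecidableEq ι] [CommRing R]
    {A D : Matrix ι ι R} {c Md M M' B Δ Δ' : ι → R}
    (hM' : M' = M + Δ + B) (hB : (1 + A) *ᵥ B = -((A - D) *ᵥ Δ))
    (hΔ : Δ = Md - M - (A *ᵥ M + c)) (hΔ' : Δ' = Md - M' - (A *ᵥ M' + c)) :
    Δ' = -(D *ᵥ Δ) := by
  have hB' : B + A *ᵥ B = -(A *ᵥ Δ - D *ᵥ Δ) := by
    rw [← sub_mulVec, ← hB, add_mulVec, one_mulVec]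
  rw [hM', mulVec_add, mulVec_add] at hΔ'
  linear_combination hΔ' - hΔ - hB'

theorem norm_diagonal_mulVec_le {ι R : Type*} [Fintype ι] [DecidableEq ι] [SeminormedRing R]
    {d : ι → R} {m : ℝ} (hm : 0 ≤ m) (hd : ∀ i, ‖d i‖ ≤ m) (v : ι → R) :
    ‖diagonal d *ᵥ v‖ ≤ m * ‖v‖ := by
  refine (pi_norm_le_iff_of_nonneg (mul_nonneg hm (norm_nonneg v))).2 fun i => ?_
  rw [mulVec_diagonal]
  calc ‖d i * v i‖ ≤ ‖d i‖ * ‖v i‖ := norm_mul_le _ _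
    _ ≤ m * ‖v‖ := mul_le_mul (hd i) (norm_le_pi_norm v i) (norm_nonneg _) hm

theorem norm_diag_le_max_abs_fin_two (A : Matrix (Fin 2) (Fin 2) ℝ) (i : Fin 2) :
    ‖A i i‖ ≤ max |A 0 0| |A 1 1| := by
  fin_cases i
  · exact le_max_left _ _
  · exact le_max_right _ _

theorem residual_scheme_II_converges_general
    (A : Matrix (Fin 2) (Fin 2) ℝ)
    (D : Matrix (Fin 2) (Fin 2) ℝ) (hD : D = Matrix.diagonal (fun i => A i i))
    (c : Fin 2 → ℝ) (U : (Fin 2 → ℝ) → (Fin 2 → ℝ))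
    (hU : ∀ p, U p = A.mulVec p + c)
    (Md : Fin 2 → ℝ) (M B Δ : ℕ → Fin 2 → ℝ)
    (hM : ∀ j, 2 ≤ j → M j = M (j - 1) + Δ (j - 1) + B j)
    (hB : ∀ j, 2 ≤ j → (1 + A).mulVec (B j) = -((A - D).mulVec (Δ (j - 1))))
    (hΔ : ∀ j, 1 ≤ j → Δ j = Md - M j - U (M j)) :
    ∀ j, 1 ≤ j → ‖Δ j‖ ≤ (max |A 0 0| |A 1 1|) ^ (j - 1) * ‖Δ 1‖ := by
  have hm : 0 ≤ max |A 0 0| |A 1 1| := le_max_of_le_left (abs_nonneg _)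
  have step : ∀ k, ‖Δ (k + 2)‖ ≤ max |A 0 0| |A 1 1| * ‖Δ (k + 1)‖ := by
    intro k
    have hrec : Δ (k + 2) = -(D *ᵥ Δ (k + 1)) :=
      residual_succ_eq_neg_diag_mulVec (hM (k + 2) (by omega)) (hB (k + 2) (by omega))
        (hU (M (k + 1)) ▸ hΔ (k + 1) (by omega)) (hU (M (k + 2)) ▸ hΔ (k + 2) (by omega))
    rw [hrec, norm_neg, hD]
    exact norm_diagonal_mulVec_le hm (norm_diag_le_max_abs_fin_two A) _
  rintro j hj
  obtain ⟨n, rfl⟩ : ∃ n, j = n + 1 := ⟨j - 1, by omega⟩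
  simpa using le_geom (u := fun k => ‖Δ (k + 1)‖) hm n fun k _ => step k

/-- Scheme (II) with |εxx| < 1 and |εyy| < 1: the residual converges to zero
geometrically in the sup norm, ‖Δ^j‖ ≤ (max(|εxx|,|εyy|))^(j-1) ‖Δ^1‖. -/
theorem residual_scheme_II_converges
    (A : Matrix (Fin 2) (Fin 2) ℝ)
    (hx : |A 0 0| < 1) (hy : |A 1 1| < 1)
    (D : Matrix (Fin 2) (Fin 2) ℝ) (hD : D = Matrix.diagonal (fun i => A i i))
    (hinv : IsUnit (1 + A))
    (c : Fin 2 → ℝ) (U : (Fin 2 → ℝ) → (Fin 2 → ℝ))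
    (hU : ∀ p, U p = A.mulVec p + c)
    (Md : Fin 2 → ℝ) (M B Δ : ℕ → Fin 2 → ℝ)
    (hM1 : M 1 = Md)
    (hM : ∀ j, 2 ≤ j → M j = M (j - 1) + Δ (j - 1) + B j)
    (hB : ∀ j, 2 ≤ j → (1 + A).mulVec (B j) = -((A - D).mulVec (Δ (j - 1))))
    (hΔ : ∀ j, 1 ≤ j → Δ j = Md - M j - U (M j)) :
    ∀ j, 1 ≤ j → ‖Δ j‖ ≤ (max |A 0 0| |A 1 1|) ^ (j - 1) * ‖Δ 1‖ :=
  residual_scheme_II_converges_general A D hD c U hU Md M B Δ hM hB hΔ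
end

section
/- For the test field U(x,y) = (α(x+y), α(x-y)) with 1/√2 < α < 1, scheme (II) still converges (since the diagonal strains ε_xx = α, ε_yy = -α satisfy |ε_xx|, |ε_yy| = α < 1, and I + A is invertible since det(I+A) = 1 - 2α² ≠ 0 requires α ≠ 1/√2), with ‖Δ^j‖_∞ ≤ α^{j-1} ‖Δ^1‖_∞, while the contraction matrix -A of scheme (I) has spectral radius α√2 > 1. -/
/-- For the test field with 1/√2 < α < 1, scheme (II) still converges in the
sup norm with rate α, while the iteration matrix -A of scheme (I) has an
eigenvalue of absolute value α√2 > 1. -/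
theorem test_field_scheme_II_converges
    (α : ℝ) (hα1 : 1 / Real.sqrt 2 < α) (hα2 : α < 1)
    (A : ℝ × ℝ → ℝ × ℝ) (hA : ∀ p : ℝ × ℝ, A p = (α * (p.1 + p.2), α * (p.1 - p.2)))
    (D : ℝ × ℝ → ℝ × ℝ) (hD : ∀ p : ℝ × ℝ, D p = (α * p.1, -α * p.2))
    (Md : ℝ × ℝ) (M B Δ : ℕ → ℝ × ℝ)
    (hM1 : M 1 = Md)
    (hM : ∀ j, 2 ≤ j → M j = M (j - 1) + Δ (j - 1) + B j)
    (hB : ∀ j, 2 ≤ j → B j + A (B j) = -(A (Δ (j - 1)) - D (Δ (j - 1))))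
    (hΔ : ∀ j, 1 ≤ j → Δ j = Md - M j - A (M j)) :
    (∀ j, 1 ≤ j → ‖Δ j‖ ≤ α ^ (j - 1) * ‖Δ 1‖) ∧
      (∃ v : ℝ × ℝ, v ≠ 0 ∧ ∃ μ : ℝ, -(A v) = μ • v ∧ |μ| = α * Real.sqrt 2) ∧
      1 < α * Real.sqrt 2 := by
  have h2 : (0:ℝ) < Real.sqrt 2 := Real.sqrt_pos.mpr (by norm_num)
  have hsq : Real.sqrt 2 * Real.sqrt 2 = 2 := Real.mul_self_sqrt (by norm_num)
  have hα0 : (0:ℝ) < α := lt_trans (by positivity) hα1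
  have hαs : 1 < α * Real.sqrt 2 := by
    rw [div_lt_iff₀ h2] at hα1; linarith
  have key : ∀ j, 2 ≤ j → Δ j = (-(α * (Δ (j-1)).1), α * (Δ (j-1)).2) := by
    intro j hj
    have e1 := hΔ j (by omega)
    have e2 := hΔ (j-1) (by omega)
    have e3 := hM j hj
    have e4 := hB j hj
    simp only [hA, hD] at e1 e2 e4
    have c1a := congrArg Prod.fst e1
    have c1b := congrArg Prod.snd e1
    have c2a := congrArg Prod.fst e2
    have c2b := congrArg Prod.snd e2
    have c3a := congrArg Prod.fst e3
    have c3b := congrArg Prod.snd e3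
    have c4a := congrArg Prod.fst e4
    have c4b := congrArg Prod.snd e4
    simp only [Prod.fst_sub, Prod.snd_sub, Prod.fst_add, Prod.snd_add,
      Prod.fst_neg, Prod.snd_neg] at c1a c1b c2a c2b c3a c3b c4a c4b
    refine Prod.ext ?_ ?_
    · show (Δ j).1 = -(α * (Δ (j-1)).1)
      linear_combination c1a - (1+α)*c3a - α*c3b - c2a - c4a
    · show (Δ j).2 = α * (Δ (j-1)).2
      linear_combination c1b - α*c3a - (1-α)*c3b - c2b - c4b
  have normstep : ∀ j, 2 ≤ j → ‖Δ j‖ = α * ‖Δ (j-1)‖ := by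
    intro j hj
    rw [key j hj, Prod.norm_def, Prod.norm_def]
    simp only [Real.norm_eq_abs, abs_neg, abs_mul, abs_of_pos hα0]
    exact (mul_max_of_nonneg _ _ hα0.le).symm
  refine ⟨?_, ⟨(1, -(1+Real.sqrt 2)), ?_, α*Real.sqrt 2, ?_, ?_⟩, hαs⟩
  · intro j hj
    induction j, hj using Nat.le_induction with
    | base => simp
    | succ n hn ih =>
      obtain ⟨m, rfl⟩ : ∃ m, n = m + 1 := ⟨n - 1, by omega⟩
      have hs := normstep (m+2) (by omega)
      calc ‖Δ (m+2)‖ = α * ‖Δ (m+1)‖ := hs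
        _ ≤ α * (α^m * ‖Δ 1‖) :=
          mul_le_mul_of_nonneg_left ih hα0.le
        _ = α^(m+1) * ‖Δ 1‖ := by rw [pow_succ]; ring
  · intro h
    have h1 := congrArg Prod.fst h
    simp at h1
  · rw [hA]
    refine Prod.ext ?_ ?_ <;>
      simp only [Prod.fst_neg, Prod.snd_neg, Prod.smul_fst, Prod.smul_snd,
        smul_eq_mul] <;> nlinarith [hsq]
  · rw [abs_of_pos (by positivity)]
end
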